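/- Every primitive pseudo-cograph is a comparability graph, i.e., its edge set admits a transitive orientation. -/

import Mathlib

/-- A graph is P₄-free (i.e., a cograph) if it has no induced subgraph
isomorphic to the path on four vertices. -/
def IsP4Free {V : Type} (G : SimpleGraph V) : Prop :=
  ¬ Nonempty (SimpleGraph.pathGraph 4 ↪g G)

/-- `G` is a `(v, G[V1], G[V2])`-pseudo-cograph. -/
def IsPseudoCographAt {V : Type} (G : SimpleGraph V) (v : V) (V1 V2 : Set V) : Prop :=
  V1 ∪ V2 = Set.univ ∧ V1 ∩ V2 = {v} ∧ 1 < V1.ncard ∧ 1 < V2.ncard ∧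
  IsP4Free (G.induce V1) ∧ IsP4Free (G.induce V2) ∧
  ((∀ x ∈ V1 \ {v}, ∀ y ∈ V2 \ {v}, G.Adj x y) ∨
   (∀ x ∈ V1 \ {v}, ∀ y ∈ V2 \ {v}, ¬ G.Adj x y))

/-- `G` is a pseudo-cograph. -/
def IsPseudoCograph {V : Type} (G : SimpleGraph V) : Prop :=
  Nat.card V ≤ 2 ∨ ∃ (v : V) (V1 V2 : Set V), IsPseudoCographAt G v V1 V2

/-- `M` is a module of `G`. -/
def IsModule {V : Type} (G : SimpleGraph V) (M : Set V) : Prop :=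
  ∀ z ∉ M, (∀ x ∈ M, G.Adj z x) ∨ (∀ x ∈ M, ¬ G.Adj z x)

/-- A graph is primitive if it has at least four vertices and all of its
modules are trivial. -/
def IsPrimitive {V : Type} (G : SimpleGraph V) : Prop :=
  4 ≤ Nat.card V ∧
    ∀ M : Set V, IsModule G M → M = ∅ ∨ (∃ x, M = {x}) ∨ M = Set.univ

/-!
A cograph on at least two vertices is disconnected or has a disconnected complement (Seinsche), so
it is a disjoint union or a join of two smaller cographs; orienting both recursively and, in a join,
all edges away from the part containing a chosen vertex `v` gives a transitive orientation in which
`v` is a source. A `(v, G₁, G₂)`-pseudo-cograph is glued from the cographs `G₁` and `G₂` at `v`. If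
`V₁ \ {v}` and `V₂ \ {v}` are not adjacent, orient both with `v` as a source; otherwise orient `G₁`
with `v` as a sink, `G₂` with `v` as a source and the edges between them from `V₁` to `V₂`. Then
a path `x → v → z` through the shared vertex only occurs in the second case, where `x → z` as well.
-/

open SimpleGraph

variable {V : Type} {G : SimpleGraph V}

def pathGraphFourIsoCompl : pathGraph 4 ≃g (pathGraph 4)ᶜ where
  toEquiv := ⟨![1, 3, 0, 2], ![2, 0, 3, 1], by decide, by decide⟩
  map_rel_iff' := by
    intro a b
    change (pathGraph 4)ᶜ.Adj (![1, 3, 0, 2] a) (![1, 3, 0, 2] b) ↔ _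
    rw [compl_adj, pathGraph_adj, pathGraph_adj]
    fin_cases a <;> fin_cases b <;> decide

lemma isIndContained_pathGraph_four_compl_iff : pathGraph 4 ⊴ Gᶜ ↔ pathGraph 4 ⊴ G := by
  rw [← compl_isIndContained_compl, compl_compl]
  exact ⟨pathGraphFourIsoCompl.isIndContained.trans, pathGraphFourIsoCompl.isIndContained'.trans⟩

lemma IsP4Free.induce (h : IsP4Free G) (s : Set V) : IsP4Free (G.induce s) :=
  fun hs => h (IsIndContained.trans hs (Embedding.induce s).isIndContained)

lemma isP4Free_of_card_le [Finite V] (hV : Nat.card V ≤ 3) : IsP4Free G := by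
  rintro ⟨e⟩
  have := Nat.card_le_card_of_injective e e.injective
  simp only [Nat.card_eq_fintype_card, Fintype.card_fin] at this
  omega

lemma isIndContained_pathGraph_four {a b c d : V} (hab : G.Adj a b) (hbc : G.Adj b c)
    (hcd : G.Adj c d) (hac : ¬ G.Adj a c) (hbd : ¬ G.Adj b d) (had : ¬ G.Adj a d) :
    pathGraph 4 ⊴ G := by
  have hac' : a ≠ c := by rintro rfl; exact had hcd
  have hbd' : b ≠ d := by rintro rfl; exact had hab
  have had' : a ≠ d := by rintro rfl; exact hac hcd.symm
  refine ⟨⟨⟨![a, b, c, d], fun i j hij => ?_⟩, fun {i j} => ?_⟩⟩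
  · fin_cases i <;> fin_cases j <;> simp_all [hab.ne, hbc.ne, hcd.ne, eq_comm]
  · change G.Adj (![a, b, c, d] i) (![a, b, c, d] j) ↔ _
    rw [pathGraph_adj]
    fin_cases i <;> fin_cases j <;> simp [hab, hbc, hcd, hac, hbd, had, adj_comm]

lemma compl_induce (s : Set V) : (G.induce s)ᶜ = Gᶜ.induce s := by
  ext a b
  simp [Subtype.ext_iff]

lemma exists_adj_reachable_induce_compl_singleton (hG : G.Connected) {v x : V} (hx : x ≠ v) :
    ∃ c, ∃ hc : c ≠ v, G.Adj v c ∧ (G.induce {v}ᶜ).Reachable ⟨x, hx⟩ ⟨c, hc⟩ := by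
  obtain ⟨p⟩ := hG.preconnected x v
  let S : Set V := {y | ∃ hy : y ≠ v, (G.induce {v}ᶜ).Reachable ⟨x, hx⟩ ⟨y, hy⟩}
  obtain ⟨⟨⟨a, b⟩, hab⟩, -, ⟨ha, hxa⟩, hb⟩ :=
    p.exists_boundary_dart S ⟨hx, .rfl⟩ fun ⟨hv, _⟩ => hv rfl
  obtain rfl : b = v := by
    by_contra hbv
    exact hb ⟨hbv, hxa.trans (Adj.reachable (G := G.induce {v}ᶜ) hab)⟩
  exact ⟨a, ha, hab.symm, hxa⟩

/-- A cut vertex `v` with a non-neighbour `w` yields the induced path `e - v - b - a`, where `e` is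
a neighbour of `v` outside the component of `w` in `G - v`, and `a - b` is an edge of that component
from a non-neighbour to a neighbour of `v`. -/
lemma isIndContained_pathGraph_four_of_not_connected_induce (hG : G.Connected) {v w : V}
    (hw : w ≠ v) (hvw : ¬ G.Adj v w) (hcut : ¬ (G.induce {v}ᶜ).Connected) :
    pathGraph 4 ⊴ G := by
  classical
  set H := G.induce {v}ᶜ
  obtain ⟨d, hwd⟩ : ∃ d, ¬ H.Reachable ⟨w, hw⟩ d := by
    by_contra! h
    exact hcut ((connected_iff_exists_forall_reachable H).2 ⟨_, h⟩)
  obtain ⟨c, hc, hvc, hwc⟩ := exists_adj_reachable_induce_compl_singleton hG hw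
  obtain ⟨e, he, hve, hde⟩ := exists_adj_reachable_induce_compl_singleton hG d.2
  obtain ⟨p⟩ := hwc
  obtain ⟨⟨⟨a, b⟩, hab⟩, hp, ha, hb⟩ :=
    p.exists_boundary_dart {y | ¬ G.Adj v y} hvw (not_not.2 hvc)
  have hwa : H.Reachable ⟨w, hw⟩ a := ⟨p.takeUntil a (p.dart_fst_mem_support_of_mem_darts hp)⟩
  have hwb : H.Reachable ⟨w, hw⟩ b := hwa.trans (Adj.reachable (G := H) hab)
  have not_adj : ∀ y, H.Reachable ⟨w, hw⟩ y → ¬ G.Adj e y := fun y hwy hey =>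
    hwd (hwy.trans ((Adj.reachable (G := H) (u := ⟨e, he⟩) hey).symm.trans hde.symm))
  exact isIndContained_pathGraph_four hve.symm (not_not.1 hb) hab.symm
    (not_adj b hwb) (by simpa [adj_comm] using ha) (not_adj a hwa)

/-- Seinsche's theorem. -/
theorem isIndContained_pathGraph_four_of_connected_of_connected_compl [Finite V] [hV : Nontrivial V]
    (hG : G.Connected) (hGc : Gᶜ.Connected) : pathGraph 4 ⊴ G := by
  revert hV
  induction V using Finite.induction_subsingleton_or_nontrivial with
  | hbase V => intro; exact (not_nontrivial V ‹_›).elim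
  | hstep V ih =>
  intro _
  obtain ⟨v⟩ := ‹Nontrivial V›.to_nonempty
  obtain ⟨w, hvw⟩ := hG.preconnected.exists_adj_of_nontrivial v
  obtain ⟨u, hvu⟩ := hGc.preconnected.exists_adj_of_nontrivial v
  set W : Set V := {v}ᶜ
  rcases subsingleton_or_nontrivial W with hW | hW
  · have : (⟨w, hvw.ne'⟩ : W) = ⟨u, hvu.ne'⟩ := Subsingleton.elim _ _
    cases congrArg Subtype.val this
    exact (hvu.2 hvw).elim
  by_cases hH : (G.induce W).Connected ∧ (G.induce W)ᶜ.Connected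
  · exact IsIndContained.trans (ih W (Finite.card_subtype_lt (x := v) (by simp [W])) hH.1 hH.2)
      (Embedding.induce W).isIndContained
  rcases not_and_or.1 hH with hH | hH
  · exact isIndContained_pathGraph_four_of_not_connected_induce hG hvu.ne' hvu.2 hH
  · rw [← isIndContained_pathGraph_four_compl_iff]
    exact isIndContained_pathGraph_four_of_not_connected_induce hGc hvw.ne'
      (fun h => h.2 hvw) (compl_induce (G := G) W ▸ hH)

lemma Set.mem_union_pair {α : Type*} {A B : Set α} {x y : α} (hx : x ∈ A ∪ B) (hy : y ∈ A ∪ B) :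
    (x ∈ A ∧ y ∈ A) ∨ (x ∈ B ∧ y ∈ B) ∨ (x ∈ A \ B ∧ y ∈ B \ A) ∨ (y ∈ A \ B ∧ x ∈ B \ A) := by
  simp only [Set.mem_union, Set.mem_sdiff] at *
  tauto

structure IsTransOrientationOn (G : SimpleGraph V) (A : Set V) (r : V → V → Prop) : Prop where
  orient : ∀ ⦃x⦄, x ∈ A → ∀ ⦃y⦄, y ∈ A → G.Adj x y → (r x y ↔ ¬ r y x)
  adj : ∀ ⦃x y⦄, r x y → G.Adj x y
  mem : ∀ ⦃x y⦄, r x y → x ∈ A ∧ y ∈ A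
  trans : ∀ ⦃x y z⦄, r x y → r y z → r x z

abbrev IsTransOrientation (G : SimpleGraph V) (r : V → V → Prop) : Prop :=
  IsTransOrientationOn G Set.univ r

namespace IsTransOrientationOn

variable {A B : Set V} {r r₁ r₂ : V → V → Prop}

lemma flip (h : IsTransOrientationOn G A r) : IsTransOrientationOn G A (flip r) where
  orient _ hx _ hy hxy := h.orient hy hx hxy.symm
  adj _ _ hxy := (h.adj hxy).symm
  mem _ _ hxy := (h.mem hxy).symm
  trans _ _ _ hxy hyz := h.trans hyz hxy

lemma notMem_of_rel_left {v x y : V} (h : IsTransOrientationOn G A r) (hAB : A ∩ B ⊆ {v})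
    (hv : ∀ y, ¬ r v y) (hxy : r x y) : x ∉ B := by
  intro hxB
  obtain rfl : x = v := hAB ⟨(h.mem hxy).1, hxB⟩
  exact hv y hxy

lemma notMem_of_rel_right {v x y : V} (h : IsTransOrientationOn G A r) (hAB : A ∩ B ⊆ {v})
    (hv : ∀ x, ¬ r x v) (hxy : r x y) : y ∉ B := by
  intro hyB
  obtain rfl : y = v := hAB ⟨(h.mem hxy).2, hyB⟩
  exact hv x hxy

lemma sup (h₁ : IsTransOrientationOn G A r₁) (h₂ : IsTransOrientationOn G B r₂)
    (hAB : ∀ x ∈ A \ B, ∀ y ∈ B \ A, ¬ G.Adj x y)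
    (h₁B : ∀ ⦃x y⦄, r₁ x y → y ∉ B) (h₂A : ∀ ⦃x y⦄, r₂ x y → y ∉ A) :
    IsTransOrientationOn G (A ∪ B) (fun x y => r₁ x y ∨ r₂ x y) where
  orient x hx y hy hxy := by
    rcases Set.mem_union_pair hx hy with ⟨hxA, hyA⟩ | ⟨hxB, hyB⟩ | ⟨hxAB, hyBA⟩ | ⟨hyAB, hxBA⟩
    · rw [or_iff_left (h₂A · hyA), or_iff_left (h₂A · hxA)]
      exact h₁.orient hxA hyA hxy
    · rw [or_iff_right (h₁B · hyB), or_iff_right (h₁B · hxB)]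
      exact h₂.orient hxB hyB hxy
    · exact (hAB x hxAB y hyBA hxy).elim
    · exact (hAB y hyAB x hxBA hxy.symm).elim
  adj x y h := h.elim (h₁.adj ·) (h₂.adj ·)
  mem x y h := h.elim (fun h => (h₁.mem h).imp .inl .inl) (fun h => (h₂.mem h).imp .inr .inr)
  trans x y z := by
    rintro (hxy | hxy) (hyz | hyz)
    · exact .inl (h₁.trans hxy hyz)
    · exact (h₁B hxy (h₂.mem hyz).1).elim
    · exact (h₂A hxy (h₁.mem hyz).1).elim
    · exact .inr (h₂.trans hxy hyz)

lemma join (h₁ : IsTransOrientationOn G A r₁) (h₂ : IsTransOrientationOn G B r₂)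
    (hAB : ∀ x ∈ A \ B, ∀ y ∈ B \ A, G.Adj x y)
    (h₁B : ∀ ⦃x y⦄, r₁ x y → x ∉ B) (h₂A : ∀ ⦃x y⦄, r₂ x y → y ∉ A) :
    IsTransOrientationOn G (A ∪ B) (fun x y => r₁ x y ∨ r₂ x y ∨ (x ∈ A \ B ∧ y ∈ B \ A)) where
  orient x hx y hy hxy := by
    rcases Set.mem_union_pair hx hy with ⟨hxA, hyA⟩ | ⟨hxB, hyB⟩ | ⟨hxAB, hyBA⟩ | ⟨hyAB, hxBA⟩
    · simp only [Set.mem_sdiff, hxA, hyA, not_true, and_false, or_false,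
        or_iff_left (h₂A · hyA), or_iff_left (h₂A · hxA)]
      exact h₁.orient hxA hyA hxy
    · simp only [Set.mem_sdiff, hxB, hyB, not_true, and_false, false_and, or_false,
        or_iff_right (h₁B · hxB), or_iff_right (h₁B · hyB)]
      exact h₂.orient hxB hyB hxy
    · refine iff_of_true (.inr (.inr ⟨hxAB, hyBA⟩)) ?_
      rintro (h | h | ⟨h, -⟩)
      exacts [h₁B h hyBA.1, h₂A h hxAB.1, hyBA.2 h.1]
    · refine iff_of_false ?_ (not_not.2 (.inr (.inr ⟨hyAB, hxBA⟩)))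
      rintro (h | h | ⟨h, -⟩)
      exacts [h₁B h hxBA.1, h₂A h hyAB.1, hxBA.2 h.1]
  adj x y := by
    rintro (h | h | ⟨hx, hy⟩)
    exacts [h₁.adj h, h₂.adj h, hAB x hx y hy]
  mem x y := by
    rintro (h | h | ⟨hx, hy⟩)
    exacts [(h₁.mem h).imp Or.inl Or.inl, (h₂.mem h).imp Or.inr Or.inr, ⟨.inl hx.1, .inr hy.1⟩]
  trans x y z := by
    rintro (hxy | hxy | ⟨hx, hy⟩) (hyz | hyz | ⟨hy', hz⟩)
    · exact .inl (h₁.trans hxy hyz)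
    · exact .inr (.inr ⟨⟨(h₁.mem hxy).1, h₁B hxy⟩, (h₂.mem hyz).2, h₂A hyz⟩)
    · exact .inr (.inr ⟨⟨(h₁.mem hxy).1, h₁B hxy⟩, hz⟩)
    · exact (h₂A hxy (h₁.mem hyz).1).elim
    · exact .inr (.inl (h₂.trans hxy hyz))
    · exact (hy'.2 (h₂.mem hxy).2).elim
    · exact (hy.2 (h₁.mem hyz).1).elim
    · exact .inr (.inr ⟨hx, (h₂.mem hyz).2, h₂A hyz⟩)
    · exact (hy.2 hy'.1).elim

end IsTransOrientationOn

lemma IsTransOrientation.map_val {A : Set V} {r : A → A → Prop}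
    (h : IsTransOrientation (G.induce A) r) :
    IsTransOrientationOn G A (Relation.Map r (↑) (↑)) where
  orient x hx y hy hxy := by
    lift x to A using hx
    lift y to A using hy
    simp only [Relation.map_apply_apply Subtype.val_injective Subtype.val_injective]
    exact h.orient trivial trivial hxy
  adj := by
    rintro _ _ ⟨a, b, hab, rfl, rfl⟩
    exact h.adj hab
  mem := by
    rintro _ _ ⟨a, b, -, rfl, rfl⟩
    exact ⟨a.2, b.2⟩
  trans := by
    rintro _ _ _ ⟨a, b, hab, rfl, rfl⟩ ⟨b', c, hbc, hb, rfl⟩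
    cases Subtype.ext hb
    exact ⟨a, c, h.trans hab hbc, rfl, rfl⟩

lemma exists_isTransOrientationOn_of_induce {A : Set V} {v : V} (hv : v ∈ A)
    (h : ∃ r, IsTransOrientation (G.induce A) r ∧ ∀ x, ¬ r x ⟨v, hv⟩) :
    ∃ r, IsTransOrientationOn G A r ∧ ∀ x, ¬ r x v := by
  obtain ⟨r, hr, hrv⟩ := h
  refine ⟨_, hr.map_val, ?_⟩
  rintro _ ⟨a, b, hab, rfl, hb⟩
  obtain rfl : b = ⟨v, hv⟩ := Subtype.ext hb
  exact hrv a hab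

lemma exists_separated_of_not_connected (hG : ¬ G.Connected) (v : V) :
    ∃ A : Set V, v ∈ A ∧ (∃ y, y ∉ A) ∧ ∀ x ∈ A, ∀ y ∉ A, ¬ G.Adj x y := by
  refine ⟨{x | G.Reachable v x}, .rfl, ?_, fun x hx y hy hxy => hy (hx.trans hxy.reachable)⟩
  by_contra! h
  exact hG ((connected_iff_exists_forall_reachable G).2 ⟨v, h⟩)

lemma IsP4Free.exists_join_or_sum_split [Finite V] [Nontrivial V] (hG : IsP4Free G) (v : V) :
    ∃ A : Set V, v ∈ A ∧ (∃ y, y ∉ A) ∧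
      ((∀ x ∈ A, ∀ y ∉ A, G.Adj x y) ∨ (∀ x ∈ A, ∀ y ∉ A, ¬ G.Adj x y)) := by
  by_cases hc : G.Connected
  · have hcc : ¬ Gᶜ.Connected := fun hcc =>
      hG (isIndContained_pathGraph_four_of_connected_of_connected_compl hc hcc)
    obtain ⟨A, hv, hA, hAc⟩ := exists_separated_of_not_connected hcc v
    refine ⟨A, hv, hA, .inl fun x hx y hy => ?_⟩
    by_contra hxy
    exact hAc x hx y hy ⟨fun h => hy (h ▸ hx), hxy⟩
  · obtain ⟨A, hv, hA, hAc⟩ := exists_separated_of_not_connected hc v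
    exact ⟨A, hv, hA, .inr hAc⟩

lemma exists_isTransOrientation_of_join_or_sum_split {A : Set V} {v : V} (hv : v ∈ A)
    (hA : (∀ x ∈ A, ∀ y ∉ A, G.Adj x y) ∨ (∀ x ∈ A, ∀ y ∉ A, ¬ G.Adj x y))
    {r₁ r₂ : V → V → Prop} (h₁ : IsTransOrientationOn G A r₁) (h₁v : ∀ x, ¬ r₁ x v)
    (h₂ : IsTransOrientationOn G Aᶜ r₂) :
    ∃ r, IsTransOrientation G r ∧ ∀ x, ¬ r x v := by
  have h₂A : ∀ ⦃x y⦄, r₂ x y → y ∉ A := fun _ _ h => (h₂.mem h).2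
  unfold IsTransOrientation
  rw [← Set.union_compl_self A]
  rcases hA with hA | hA
  · refine ⟨_, h₁.join h₂ (fun x hx y hy => hA x hx.1 y hy.1) (fun _ _ h => not_not.2 (h₁.mem h).1)
      h₂A, ?_⟩
    rintro x (h | h | ⟨-, h, -⟩)
    exacts [h₁v x h, (h₂.mem h).2 hv, h hv]
  · refine ⟨_, h₁.sup h₂ (fun x hx y hy => hA x hx.1 y hy.1) (fun _ _ h => not_not.2 (h₁.mem h).2)
      h₂A, ?_⟩
    rintro x (h | h)
    exacts [h₁v x h, (h₂.mem h).2 hv]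

lemma isTransOrientation_of_subsingleton [Subsingleton V] :
    IsTransOrientation G (fun _ _ => False) where
  orient x _ y _ hxy := (hxy.ne (Subsingleton.elim x y)).elim
  adj _ _ := False.elim
  mem _ _ := False.elim
  trans _ _ _ := False.elim

theorem IsP4Free.exists_isTransOrientation_source [Finite V] (hG : IsP4Free G) (v : V) :
    ∃ r, IsTransOrientation G r ∧ ∀ x, ¬ r x v := by
  induction V using Finite.induction_subsingleton_or_nontrivial with
  | hbase V => exact ⟨_, isTransOrientation_of_subsingleton, fun _ => id⟩
  | hstep V ih =>
    obtain ⟨A, hv, ⟨y, hy⟩, hA⟩ := hG.exists_join_or_sum_split v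
    obtain ⟨r₁, h₁, h₁v⟩ := exists_isTransOrientationOn_of_induce hv <|
      ih A (Finite.card_subtype_lt hy) (hG.induce A) ⟨v, hv⟩
    obtain ⟨r₂, h₂, -⟩ := ih (Aᶜ : Set V) (Finite.card_subtype_lt (not_not.2 hv))
      (hG.induce Aᶜ) ⟨y, hy⟩
    exact exists_isTransOrientation_of_join_or_sum_split hv hA h₁ h₁v h₂.map_val

theorem IsP4Free.exists_isTransOrientation [Finite V] (hG : IsP4Free G) :
    ∃ r, IsTransOrientation G r := by
  rcases isEmpty_or_nonempty V with hV | ⟨⟨v⟩⟩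
  · exact ⟨_, isTransOrientation_of_subsingleton⟩
  · exact (hG.exists_isTransOrientation_source v).imp fun _ => And.left

theorem IsPseudoCographAt.exists_isTransOrientation [Finite V] {v : V} {V₁ V₂ : Set V}
    (h : IsPseudoCographAt G v V₁ V₂) : ∃ r, IsTransOrientation G r := by
  obtain ⟨hU, hI, -, -, hF₁, hF₂, hP3⟩ := h
  have hv : v ∈ V₁ ∩ V₂ := hI ▸ rfl
  have h₁₂ : V₁ ∩ V₂ ⊆ {v} := hI.subset
  have h₂₁ : V₂ ∩ V₁ ⊆ {v} := Set.inter_comm V₁ V₂ ▸ h₁₂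
  rw [← hI, Set.sdiff_self_inter, Set.inter_comm, Set.sdiff_self_inter] at hP3
  obtain ⟨r₁, h₁, h₁v⟩ :=
    exists_isTransOrientationOn_of_induce hv.1 (hF₁.exists_isTransOrientation_source _)
  obtain ⟨r₂, h₂, h₂v⟩ :=
    exists_isTransOrientationOn_of_induce hv.2 (hF₂.exists_isTransOrientation_source _)
  have h₂V₁ : ∀ ⦃x y⦄, r₂ x y → y ∉ V₁ := fun _ _ => h₂.notMem_of_rel_right h₂₁ h₂v
  unfold IsTransOrientation
  rw [← hU]
  rcases hP3 with hjoin | hsep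
  · exact ⟨_, h₁.flip.join h₂ hjoin (fun _ _ => h₁.flip.notMem_of_rel_left h₁₂ h₁v) h₂V₁⟩
  · exact ⟨_, h₁.sup h₂ hsep (fun _ _ => h₁.notMem_of_rel_right h₁₂ h₁v) h₂V₁⟩

theorem primitive_pseudoCograph_comparability_general {V : Type} [Fintype V]
    (G : SimpleGraph V) (hpc : IsPseudoCograph G) :
    ∃ r : V → V → Prop,
      (∀ x y, G.Adj x y → (r x y ↔ ¬ r y x)) ∧
      (∀ x y, r x y → G.Adj x y) ∧
      (∀ x y z, r x y → r y z → r x z) := by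
  obtain ⟨r, hr⟩ : ∃ r, IsTransOrientation G r := by
    rcases hpc with hsmall | ⟨v, V₁, V₂, h⟩
    · exact (isP4Free_of_card_le (by omega)).exists_isTransOrientation
    · exact h.exists_isTransOrientation
  exact ⟨r, fun _ _ => hr.orient trivial trivial, fun _ _ h => hr.adj h, fun _ _ _ h h' => hr.trans h h'⟩

/-- Every primitive pseudo-cograph is a comparability graph: its edge set
admits a transitive orientation. -/
theorem primitive_pseudoCograph_comparability {V : Type} [Fintype V]
    (G : SimpleGraph V) (hprim : IsPrimitive G) (hpc : IsPseudoCograph G) :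
    ∃ r : V → V → Prop,
      (∀ x y, G.Adj x y → (r x y ↔ ¬ r y x)) ∧
      (∀ x y, r x y → G.Adj x y) ∧
      (∀ x y z, r x y → r y z → r x z) :=
  primitive_pseudoCograph_comparability_general G hpc
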